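/- Let A = (A_1,…,A_n) be a nonnegative vector in ℝ^n and D = n + A_1 + ⋯ + A_n. Let f : ℝ^n → ℝ be measurable with ∫_{ℝ^n_A} |f|^2 x^A dx = 1 and ∫_{ℝ^n_A} |f|^2 |x|^2 x^A dx < ∞, and assume |f|^2 log(|f|^2) is integrable on ℝ^n_A with respect to x^A dx. Then −∫_{ℝ^n_A} |f|^2 log(|f|^2) x^A dx ≤ (D/2) · log( (2 Π(A) e / D) ∫_{ℝ^n_A} |f|^2 |x|^2 x^A dx ). -/

import Mathlib

/-!
Gibbs' inequality `∫ p log p ≥ ∫ p log g` for the probability densities `p = f²` and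
`g = Z⁻¹ exp (-b |x|²)` with respect to `x^A dx` on `ℝ^n_A`. By Fubini, `Z` factorizes into
one-dimensional Gamma integrals: `Z = b^(-D/2) ∏ Γ((A_i+1)/2) / 2^k`, each constrained
coordinate contributing a half-line and hence a factor `1/2`. This gives
`-∫ f² log f² ≤ log Z + b ∫ f² |x|²` for every `b > 0`, and `b = D / (2 ∫ f² |x|²)` is the
optimal choice.
-/

open MeasureTheory Real Filter

noncomputable section

/-- The positivity region `ℝ^n_A = {x : x_i > 0 whenever A_i > 0}`. -/
def monSet {ι : Type*} [Fintype ι] (A : ι → ℝ) : Set (EuclideanSpace ℝ ι) :=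
  {x | ∀ i, 0 < A i → 0 < x i}

/-- The monomial weight `x^A = ∏ |x_i|^{A_i}`. -/
def monWeight {ι : Type*} [Fintype ι] (A : ι → ℝ) (x : EuclideanSpace ℝ ι) : ℝ :=
  ∏ i, |x i| ^ A i

/-- The homogeneous dimension `D = n + A_1 + ⋯ + A_n`. -/
def monDim {ι : Type*} [Fintype ι] (A : ι → ℝ) : ℝ :=
  (Fintype.card ι : ℝ) + ∑ i, A i

/-- `k = #{i : A_i > 0}`. -/
def monK {ι : Type*} [Fintype ι] (A : ι → ℝ) : ℕ :=
  Nat.card {i : ι // 0 < A i}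

/-- `Π(A) = [ (∏ Γ((A_i+1)/2)) / 2^k ]^{2/D}`. -/
def monPi {ι : Type*} [Fintype ι] (A : ι → ℝ) : ℝ :=
  ((∏ i, Gamma ((A i + 1) / 2)) / 2 ^ monK A) ^ (2 / monDim A)

open Set

section MonomialGaussian

variable {ι : Type*} [Fintype ι]

lemma monWeight_nonneg (A : ι → ℝ) (x : EuclideanSpace ℝ ι) : 0 ≤ monWeight A x :=
  Finset.prod_nonneg fun _ _ => rpow_nonneg (abs_nonneg _) _

lemma measurableSet_monSet (A : ι → ℝ) : MeasurableSet (monSet A) := by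
  have : monSet A = ⋂ i ∈ {i | 0 < A i}, {x : EuclideanSpace ℝ ι | 0 < x i} := by
    ext x; simp [monSet]
  rw [this]
  exact .biInter (to_countable _) fun i _ => measurableSet_lt measurable_const (by fun_prop)

def monGaussFactor (a b : ℝ) : ℝ → ℝ :=
  indicator {t | 0 < a → 0 < t} fun t => |t| ^ a * exp (-b * t ^ 2)

lemma indicator_monSet_exp_neg_mul_norm_sq_mul_monWeight (A : ι → ℝ) (b : ℝ)
    (x : EuclideanSpace ℝ ι) :
    indicator (monSet A) (fun x => exp (-b * ‖x‖ ^ 2) * monWeight A x) x =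
      ∏ i, monGaussFactor (A i) b (x i) := by
  by_cases hx : x ∈ monSet A
  · have hfactor (i : ι) : monGaussFactor (A i) b (x i) = |x i| ^ A i * exp (-b * x i ^ 2) :=
      indicator_of_mem (s := {t | 0 < A i → 0 < t}) (hx i) _
    rw [indicator_of_mem hx, Finset.prod_congr rfl fun i _ => hfactor i, Finset.prod_mul_distrib,
      ← exp_sum, ← Finset.mul_sum, EuclideanSpace.real_norm_sq_eq, monWeight, mul_comm]
  · obtain ⟨i, hAi, hxi⟩ : ∃ i, 0 < A i ∧ ¬ 0 < x i := by simpa [monSet] using hx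
    rw [indicator_of_notMem hx, Finset.prod_eq_zero (Finset.mem_univ i)]
    exact indicator_of_notMem (s := {t | 0 < A i → 0 < t}) (fun h => hxi (h hAi)) _

variable {a b : ℝ}

lemma integrable_monGaussFactor (ha : 0 ≤ a) (hb : 0 < b) : Integrable (monGaussFactor a b) := by
  rcases ha.lt_or_eq with ha | rfl
  · have : {t : ℝ | 0 < a → 0 < t} = Ioi 0 := by ext; simp [ha]
    rw [monGaussFactor, this, integrable_indicator_iff measurableSet_Ioi]
    exact (integrableOn_rpow_mul_exp_neg_mul_sq (s := a) hb (by linarith)).congr_fun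
      (fun t ht => by rw [abs_of_pos ht]) measurableSet_Ioi
  · simpa [monGaussFactor] using integrable_exp_neg_mul_sq hb

lemma integral_monGaussFactor (ha : 0 ≤ a) (hb : 0 < b) :
    ∫ t, monGaussFactor a b t =
      b ^ (-(a + 1) / 2) * Gamma ((a + 1) / 2) * if 0 < a then 2⁻¹ else 1 := by
  rcases ha.lt_or_eq with ha | rfl
  · have : {t : ℝ | 0 < a → 0 < t} = Ioi 0 := by ext; simp [ha]
    rw [monGaussFactor, this, integral_indicator measurableSet_Ioi, if_pos ha,
      setIntegral_congr_fun measurableSet_Ioi fun t (ht : 0 < t) => by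
        rw [abs_of_pos ht, ← rpow_two],
      integral_rpow_mul_exp_neg_mul_rpow two_pos (by linarith) hb]
    ring
  · simp only [monGaussFactor, lt_irrefl, false_imp_iff, ofPred_true, indicator_univ, rpow_zero,
      one_mul, if_false, mul_one, zero_add, integral_gaussian, Gamma_one_half_eq]
    rw [sqrt_div pi_pos.le, neg_div, rpow_neg hb.le, ← sqrt_eq_rpow, div_eq_inv_mul, ← one_div]

def monGaussMass (A : ι → ℝ) : ℝ :=
  (∏ i, Gamma ((A i + 1) / 2)) / 2 ^ monK A

lemma monGaussMass_pos {A : ι → ℝ} (hA : ∀ i, 0 ≤ A i) : 0 < monGaussMass A :=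
  div_pos (Finset.prod_pos fun i _ => Gamma_pos_of_pos (by linarith [hA i])) (by positivity)

variable {A : ι → ℝ}

lemma integrableOn_exp_neg_mul_norm_sq_mul_monWeight (hA : ∀ i, 0 ≤ A i) (hb : 0 < b) :
    IntegrableOn (fun x => exp (-b * ‖x‖ ^ 2) * monWeight A x) (monSet A) := by
  rw [← integrable_indicator_iff (measurableSet_monSet A),
    funext (indicator_monSet_exp_neg_mul_norm_sq_mul_monWeight A b)]
  exact ((EuclideanSpace.volume_preserving_symm_measurableEquiv_toLp ι).integrable_comp_emb
    (MeasurableEquiv.measurableEmbedding _)).mpr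
    (.fintype_prod fun i => integrable_monGaussFactor (hA i) hb)

lemma integral_exp_neg_mul_norm_sq_mul_monWeight (hA : ∀ i, 0 ≤ A i) (hb : 0 < b) :
    ∫ x in monSet A, exp (-b * ‖x‖ ^ 2) * monWeight A x =
      b ^ (-monDim A / 2) * monGaussMass A := by
  have hpow : ∏ i, b ^ (-(A i + 1) / 2) = b ^ (-monDim A / 2) := by
    rw [← rpow_sum_of_pos hb, monDim, ← Finset.sum_div, Finset.sum_neg_distrib,
      Finset.sum_add_distrib]
    simp [add_comm]
  have hhalf : ∏ i, (if 0 < A i then (2⁻¹ : ℝ) else 1) = (2 ^ monK A)⁻¹ := by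
    rw [Finset.prod_ite, Finset.prod_const_one, mul_one, Finset.prod_const, monK,
      Nat.card_eq_fintype_card, Fintype.card_subtype, inv_pow]
  rw [← integral_indicator (measurableSet_monSet A),
    funext (indicator_monSet_exp_neg_mul_norm_sq_mul_monWeight A b)]
  refine ((EuclideanSpace.volume_preserving_symm_measurableEquiv_toLp ι).integral_comp'
    fun y => ∏ i, monGaussFactor (A i) b (y i)).trans ?_
  rw [integral_fintype_prod_volume_eq_prod]
  simp only [integral_monGaussFactor (hA _) hb, Finset.prod_mul_distrib, hpow, hhalf,
    monGaussMass]
  ring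

end MonomialGaussian

lemma mul_log_sub_mul_log_le_sub {p g : ℝ} (hp : 0 ≤ p) (hg : 0 < g) :
    p * log g - p * log p ≤ g - p := by
  rcases hp.lt_or_eq with hp | rfl
  · calc p * log g - p * log p = p * log (g / p) := by rw [log_div hg.ne' hp.ne']; ring
      _ ≤ p * (g / p - 1) :=
        mul_le_mul_of_nonneg_left (log_le_sub_one_of_pos (by positivity)) hp.le
      _ = g - p := by field_simp
  · simpa using hg.le

theorem integral_mul_log_le_of_integral_le {α : Type*} [MeasurableSpace α] {μ : Measure α}
    {w p g : α → ℝ} (hw : ∀ x, 0 ≤ w x) (hp : ∀ x, 0 ≤ p x) (hg : ∀ x, 0 < g x)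
    (hpw : Integrable (fun x => p x * w x) μ) (hgw : Integrable (fun x => g x * w x) μ)
    (hplogp : Integrable (fun x => p x * log (p x) * w x) μ)
    (hplogg : Integrable (fun x => p x * log (g x) * w x) μ)
    (hmass : ∫ x, g x * w x ∂μ ≤ ∫ x, p x * w x ∂μ) :
    ∫ x, p x * log (g x) * w x ∂μ ≤ ∫ x, p x * log (p x) * w x ∂μ := by
  have hpointwise : ∫ x, (p x * log (g x) * w x - p x * log (p x) * w x) ∂μ ≤
      ∫ x, (g x * w x - p x * w x) ∂μ := by
    refine integral_mono (hplogg.sub hplogp) (hgw.sub hpw) fun x => ?_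
    simpa only [sub_mul] using
      mul_le_mul_of_nonneg_right (mul_log_sub_mul_log_le_sub (hp x) (hg x)) (hw x)
  rw [integral_sub hplogg hplogp, integral_sub hgw hpw] at hpointwise
  linarith

section Entropy

variable {ι : Type*} [Fintype ι] {A : ι → ℝ} {f : EuclideanSpace ℝ ι → ℝ}

theorem neg_integral_sq_mul_log_sq_le (hA : ∀ i, 0 ≤ A i)
    (hnorm : ∫ x in monSet A, f x ^ 2 * monWeight A x = 1)
    (hmom : IntegrableOn (fun x => f x ^ 2 * ‖x‖ ^ 2 * monWeight A x) (monSet A))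
    (hent : IntegrableOn (fun x => f x ^ 2 * log (f x ^ 2) * monWeight A x) (monSet A))
    {b : ℝ} (hb : 0 < b) :
    -∫ x in monSet A, f x ^ 2 * log (f x ^ 2) * monWeight A x ≤
      log (monGaussMass A) - monDim A / 2 * log b +
        b * ∫ x in monSet A, f x ^ 2 * ‖x‖ ^ 2 * monWeight A x := by
  set Z := b ^ (-monDim A / 2) * monGaussMass A with hZ
  have hZpos : 0 < Z := mul_pos (rpow_pos_of_pos hb _) (monGaussMass_pos hA)
  set g : EuclideanSpace ℝ ι → ℝ := fun x => Z⁻¹ * exp (-b * ‖x‖ ^ 2) with hg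
  have hlog_g (x) : log (g x) = -log Z - b * ‖x‖ ^ 2 := by
    rw [hg, log_mul (inv_ne_zero hZpos.ne') (exp_ne_zero _), log_inv, log_exp]
    ring
  have hmass_f : IntegrableOn (fun x => f x ^ 2 * monWeight A x) (monSet A) :=
    Integrable.of_integral_ne_zero (by rw [hnorm]; exact one_ne_zero)
  have hmass_g_int : IntegrableOn (fun x => g x * monWeight A x) (monSet A) := by
    simpa only [hg, mul_assoc, IntegrableOn] using
      (integrableOn_exp_neg_mul_norm_sq_mul_monWeight hA hb).const_mul Z⁻¹
  have hmass_g : ∫ x in monSet A, g x * monWeight A x = 1 := by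
    simp only [hg, mul_assoc]
    rw [integral_const_mul, integral_exp_neg_mul_norm_sq_mul_monWeight hA hb, ← hZ,
      inv_mul_cancel₀ hZpos.ne']
  have hcross : (fun x => f x ^ 2 * log (g x) * monWeight A x) = fun x =>
      -log Z * (f x ^ 2 * monWeight A x) - b * (f x ^ 2 * ‖x‖ ^ 2 * monWeight A x) := by
    ext x; rw [hlog_g]; ring
  have hcross_int : IntegrableOn (fun x => f x ^ 2 * log (g x) * monWeight A x) (monSet A) := by
    rw [hcross]; exact (hmass_f.const_mul _).sub (hmom.const_mul _)
  have hgibbs := integral_mul_log_le_of_integral_le (monWeight_nonneg A)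
    (fun x => sq_nonneg (f x)) (fun x => by positivity) hmass_f hmass_g_int hent hcross_int
    (by rw [hmass_g, hnorm])
  rw [hcross, integral_sub (hmass_f.const_mul _) (hmom.const_mul _), integral_const_mul,
    integral_const_mul, hnorm] at hgibbs
  have hlogZ : log Z = -monDim A / 2 * log b + log (monGaussMass A) := by
    rw [hZ, log_mul (rpow_pos_of_pos hb _).ne' (monGaussMass_pos hA).ne', log_rpow hb]
  linarith

theorem integral_sq_mul_norm_sq_mul_monWeight_pos [Nonempty ι]
    (hnorm : ∫ x in monSet A, f x ^ 2 * monWeight A x = 1)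
    (hmom : IntegrableOn (fun x => f x ^ 2 * ‖x‖ ^ 2 * monWeight A x) (monSet A)) :
    0 < ∫ x in monSet A, f x ^ 2 * ‖x‖ ^ 2 * monWeight A x := by
  have hnonneg : 0 ≤ fun x => f x ^ 2 * ‖x‖ ^ 2 * monWeight A x := fun x => by
    have := monWeight_nonneg A x; positivity
  refine (integral_nonneg hnonneg).lt_of_ne fun hzero => ?_
  have hvanish := (integral_eq_zero_iff_of_nonneg hnonneg hmom).mp hzero.symm
  have hne_zero : ∀ᵐ x ∂volume.restrict (monSet A), x ≠ 0 :=
    ae_restrict_of_ae (measure_eq_zero_iff_ae_notMem.mp (measure_singleton 0))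
  have hmass_zero : (fun x => f x ^ 2 * monWeight A x) =ᵐ[volume.restrict (monSet A)] 0 := by
    filter_upwards [hvanish, hne_zero] with x hx hx0
    have hnorm_pos : 0 < ‖x‖ ^ 2 := by positivity
    simp only [Pi.zero_apply] at hx ⊢
    nlinarith
  rw [integral_eq_zero_of_ae hmass_zero] at hnorm
  exact zero_ne_one hnorm

end Entropy

theorem shannon_L2_monomial_weight_general {n : ℕ} (hn : 0 < n) (A : Fin n → ℝ) (hA : ∀ i, 0 ≤ A i)
    (f : EuclideanSpace ℝ (Fin n) → ℝ)
    (hnorm : ∫ x in monSet A, f x ^ 2 * monWeight A x = 1)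
    (hmom : IntegrableOn (fun x => f x ^ 2 * ‖x‖ ^ 2 * monWeight A x) (monSet A))
    (hent : IntegrableOn (fun x => f x ^ 2 * log (f x ^ 2) * monWeight A x) (monSet A)) :
    -∫ x in monSet A, f x ^ 2 * log (f x ^ 2) * monWeight A x ≤
      monDim A / 2 *
        log (2 * monPi A * exp 1 / monDim A *
          ∫ x in monSet A, f x ^ 2 * ‖x‖ ^ 2 * monWeight A x) := by
  have : Nonempty (Fin n) := ⟨⟨0, hn⟩⟩
  set M := ∫ x in monSet A, f x ^ 2 * ‖x‖ ^ 2 * monWeight A x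
  set D := monDim A with hD
  have hDpos : 0 < D := add_pos_of_pos_of_nonneg (by simpa using hn)
    (Finset.sum_nonneg fun i _ => hA i)
  have hMpos : 0 < M := integral_sq_mul_norm_sq_mul_monWeight_pos hnorm hmom
  have hG := monGaussMass_pos hA
  have hb : 0 < D / (2 * M) := by positivity
  calc _ ≤ log (monGaussMass A) - D / 2 * log (D / (2 * M)) + D / (2 * M) * M :=
        neg_integral_sq_mul_log_sq_le hA hnorm hmom hent hb
    _ = D / 2 * (2 / D * log (monGaussMass A) + log (exp 1) + log (2 * M / D)) := by
        rw [log_exp, log_div, log_div, log_mul] <;> try positivity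
        field_simp
        ring
    _ = D / 2 * log (2 * monPi A * exp 1 / D * M) := by
        rw [monPi, ← hD, ← monGaussMass, ← log_rpow hG, ← log_mul, ← log_mul] <;>
          try positivity
        ring_nf

/-- the `L²` Shannon type inequality with monomial weights.
(Recall `Real.log 0 = 0`, so `|f|² log |f|²` vanishes where `f = 0`.) -/
theorem shannon_L2_monomial_weight {n : ℕ} (hn : 0 < n) (A : Fin n → ℝ) (hA : ∀ i, 0 ≤ A i)
    (f : EuclideanSpace ℝ (Fin n) → ℝ) (hf : Measurable f)
    (hnorm : ∫ x in monSet A, f x ^ 2 * monWeight A x = 1)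
    (hmom : IntegrableOn (fun x => f x ^ 2 * ‖x‖ ^ 2 * monWeight A x) (monSet A))
    (hent : IntegrableOn (fun x => f x ^ 2 * log (f x ^ 2) * monWeight A x) (monSet A)) :
    -∫ x in monSet A, f x ^ 2 * log (f x ^ 2) * monWeight A x ≤
      monDim A / 2 *
        log (2 * monPi A * exp 1 / monDim A *
          ∫ x in monSet A, f x ^ 2 * ‖x‖ ^ 2 * monWeight A x) :=
  shannon_L2_monomial_weight_general hn A hA f hnorm hmom hent
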